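/- The square roots of the densities converge at rate ε in L². Let γ > 1, κ > 0, 0 < b_* ≤ b^* and C > 0. There exists C' > 0, depending only on γ, κ, b_*, b^*, C, such that for every ε ∈ (0,1], every measurable ϱ : 𝕋³ → (0,∞) and every measurable b : 𝕋³ → [b_*, b^*] with ∫_{𝕋³} H(ϱ;b) dx ≤ C ε², one has ∫_{𝕋³} |√ϱ − √b|² dx ≤ C' ε². -/

import Mathlib

open MeasureTheory Filter

noncomputable section

/-- Points of the (fundamental domain of the) three-dimensional torus. -/
abbrev Vec3 := Fin 3 → ℝ

/-- Fundamental domain of the torus `𝕋³`. -/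
def cube : Set Vec3 := Set.Icc 0 1

/-- The Lebesgue measure on the fundamental domain of `𝕋³`. -/
def μΩ : Measure Vec3 := volume.restrict cube

/-- A function on `ℝ³` is (ℤ³-)periodic, i.e. lives on the torus `𝕋³`. -/
def isPeriodic {E : Type*} (f : Vec3 → E) : Prop :=
  ∀ (x : Vec3) (k : Fin 3 → ℤ), f (x + fun i => (k i : ℝ)) = f x

def dot3 (a b : Vec3) : ℝ := ∑ i, a i * b i

def sq3 (a : Vec3) : ℝ := dot3 a a

def mdot3 (A B : Fin 3 → Fin 3 → ℝ) : ℝ := ∑ i, ∑ j, A i j * B i j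

/-- Gradient of a scalar function on `ℝ³`. -/
def grad (f : Vec3 → ℝ) (x : Vec3) : Vec3 := fun i => fderiv ℝ f x (Pi.single i 1)

/-- Jacobian matrix `(∇u)_{ij} = ∂_j u_i` of a vector field. -/
def gradV (u : Vec3 → Vec3) (x : Vec3) : Fin 3 → Fin 3 → ℝ :=
  fun i j => fderiv ℝ (fun y => u y i) x (Pi.single j 1)

/-- Divergence of a vector field. -/
def div3 (u : Vec3 → Vec3) (x : Vec3) : ℝ := ∑ i, gradV u x i i

/-- Row-wise divergence of a matrix field: `(div A)_i = ∑_j ∂_j A_{ij}`. -/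
def divMat (A : Vec3 → Fin 3 → Fin 3 → ℝ) (x : Vec3) : Vec3 :=
  fun i => ∑ j, fderiv ℝ (fun y => A y i j) x (Pi.single j 1)

/-- Symmetric part `𝔻u` of the Jacobian. -/
def Dsym (u : Vec3 → Vec3) (x : Vec3) : Fin 3 → Fin 3 → ℝ :=
  fun i j => (gradV u x i j + gradV u x j i) / 2

/-- Skew-symmetric part `𝔸u` of the Jacobian. -/
def Askew (u : Vec3 → Vec3) (x : Vec3) : Fin 3 → Fin 3 → ℝ :=
  fun i j => (gradV u x i j - gradV u x j i) / 2

/-- `curl W = ∇ × W` in three dimensions. -/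
def curl3 (u : Vec3 → Vec3) (x : Vec3) : Vec3 :=
  ![gradV u x 2 1 - gradV u x 1 2,
    gradV u x 0 2 - gradV u x 2 0,
    gradV u x 1 0 - gradV u x 0 1]

/-- Cross product in `ℝ³`. -/
def cross3 (a b : Vec3) : Vec3 :=
  ![a 1 * b 2 - a 2 * b 1, a 2 * b 0 - a 0 * b 2, a 0 * b 1 - a 1 * b 0]

/-- The pressure `p(ϱ) = ϱ^γ/γ - ϱ^{-κ}/κ`. -/
def press (γ κ ϱ : ℝ) : ℝ := ϱ ^ γ / γ - ϱ ^ (-κ) / κ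

/-- The pressure potential `H(ϱ) = ϱ ∫₁^ϱ p(z) z^{-2} dz`. -/
def Hpot (γ κ ϱ : ℝ) : ℝ := ϱ * ∫ z in (1:ℝ)..ϱ, press γ κ z / z ^ 2

/-- The relative pressure potential `H(ϱ;b) = H(ϱ) - H(b) - H'(b)(ϱ-b)`. -/
def Hrel (γ κ ϱ b : ℝ) : ℝ := Hpot γ κ ϱ - Hpot γ κ b - deriv (Hpot γ κ) b * (ϱ - b)

/-- `Π(ϱ;b) = p(ϱ) - p(b) - p'(b)(ϱ-b)`. -/
def PiRel (γ κ ϱ b : ℝ) : ℝ := press γ κ ϱ - press γ κ b - deriv (press γ κ) b * (ϱ - b)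

/-- The classical relative energy `E(ϱ,u | b)`. -/
def energyE (γ κ ε : ℝ) (b ϱ : Vec3 → ℝ) (u : Vec3 → Vec3) : ℝ :=
  (1/2) * ∫ x, ϱ x * sq3 (u x) ∂μΩ + (1/ε^2) * ∫ x, Hrel γ κ (ϱ x) (b x) ∂μΩ

/-- The BD entropy functional `F(ϱ,u | b)`. -/
def energyF (ν : ℝ) (b ϱ : Vec3 → ℝ) (u : Vec3 → Vec3) : ℝ :=
  ∫ x, ϱ x * sq3 (fun i => u x i + ν * grad (fun y => Real.log (ϱ y / b y)) x i) ∂μΩ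

/-- Real Lᵖ norm (on the torus) of a scalar function. -/
def LpN (p : ℝ) (f : Vec3 → ℝ) : ℝ := (∫ x, |f x| ^ p ∂μΩ) ^ (1/p)

/-- Real Lᵖ norm (on the torus) of a vector field. -/
def LpNV (p : ℝ) (f : Vec3 → Vec3) : ℝ := (∫ x, Real.sqrt (sq3 (f x)) ^ p ∂μΩ) ^ (1/p)

/-- Real Lᵖ norm (on the torus) of a matrix field. -/
def LpNM (p : ℝ) (A : Vec3 → Fin 3 → Fin 3 → ℝ) : ℝ :=
  (∫ x, Real.sqrt (mdot3 (A x) (A x)) ^ p ∂μΩ) ^ (1/p)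

/-- The static profile `b`, solving `∇p(b) = b ∇G`, with the force `G`. -/
structure StaticProfile (γ κ : ℝ) where
  G : Vec3 → ℝ
  b : Vec3 → ℝ
  bLow : ℝ
  bHigh : ℝ
  hG : ContDiff ℝ 3 G
  hb : ContDiff ℝ 3 b
  hGper : isPeriodic G
  hbper : isPeriodic b
  hlow : 0 < bLow
  hbounds : ∀ x, bLow ≤ b x ∧ b x ≤ bHigh
  hstatic : ∀ x, grad (fun y => press γ κ (b y)) x = fun i => b x * grad G x i

/-- Scalar test functions on `[0,T) × 𝕋³`. -/
structure IsTest (T : ℝ) (ξ : ℝ → Vec3 → ℝ) : Prop where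
  smooth : ContDiff ℝ (⊤ : ℕ∞) (fun p : ℝ × Vec3 => ξ p.1 p.2)
  per : ∀ t, isPeriodic (ξ t)
  supp : ∃ T' < T, ∀ t x, T' ≤ t → ξ t x = 0

/-- Vector-valued test functions on `[0,T) × 𝕋³`. -/
structure IsTestV (T : ℝ) (ψ : ℝ → Vec3 → Vec3) : Prop where
  smooth : ContDiff ℝ (⊤ : ℕ∞) (fun p : ℝ × Vec3 => ψ p.1 p.2)
  per : ∀ t, isPeriodic (ψ t)
  supp : ∃ T' < T, ∀ t x, T' ≤ t → ψ t x = 0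

/-- Vector-valued test functions on `𝕋³`. -/
structure IsTestS (ψ : Vec3 → Vec3) : Prop where
  smooth : ContDiff ℝ (⊤ : ℕ∞) ψ
  per : isPeriodic ψ

/-- Time derivative of a time-dependent scalar field. -/
def dt (ξ : ℝ → Vec3 → ℝ) (t : ℝ) (x : Vec3) : ℝ := deriv (fun s => ξ s x) t

/-- Time derivative of a time-dependent vector field. -/
def dtV (ψ : ℝ → Vec3 → Vec3) (t : ℝ) (x : Vec3) : Vec3 := fun i => deriv (fun s => ψ s x i) t

/-- A global-in-time finite energy weak solution of the scaled system (NSε),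
with BD entropy constant `C0`. -/
structure FEWeakSol (γ κ ν ε C0 : ℝ) (P : StaticProfile γ κ)
    (ϱ0 : Vec3 → ℝ) (u0 : Vec3 → Vec3)
    (ϱ : ℝ → Vec3 → ℝ) (u : ℝ → Vec3 → Vec3) : Prop where
  nonneg : ∀ t x, 0 ≤ ϱ t x
  per_ϱ : ∀ t, isPeriodic (ϱ t)
  per_u : ∀ t, isPeriodic (u t)
  bd_ϱ : ∃ C, ∀ t, 0 ≤ t → ∫ x, (ϱ t x) ^ γ ∂μΩ ≤ C
  bd_ϱinv : ∃ C, ∀ t, 0 ≤ t → ∫ x, (ϱ t x) ^ (-κ) ∂μΩ ≤ C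
  bd_gradsqrt : ∃ C, ∀ t, 0 ≤ t →
    ∫ x, sq3 (grad (fun y => Real.sqrt (ϱ t y)) x) ∂μΩ ≤ C
  bd_pgrad : ∀ T > 0, ∃ C, ∫ t in Set.Ioc (0:ℝ) T,
    (∫ x, (deriv (press γ κ) (ϱ t x) / ϱ t x) * sq3 (grad (ϱ t) x) ∂μΩ) ≤ C
  bd_ϱu : ∃ C, ∀ t, 0 ≤ t → ∫ x, ϱ t x * sq3 (u t x) ∂μΩ ≤ C
  bd_ϱgradu : ∀ T > 0, ∃ C, ∫ t in Set.Ioc (0:ℝ) T,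
    (∫ x, ϱ t x * mdot3 (gradV (u t) x) (gradV (u t) x) ∂μΩ) ≤ C
  weak_mass : ∀ T > 0, ∀ ξ : ℝ → Vec3 → ℝ, IsTest T ξ →
    (∫ x, ϱ0 x * ξ 0 x ∂μΩ)
      + ∫ t in Set.Ioi (0:ℝ),
          (∫ x, (ϱ t x * dt ξ t x + ϱ t x * dot3 (u t x) (grad (ξ t) x)) ∂μΩ) = 0
  weak_mom : ∀ T > 0, ∀ ψ : ℝ → Vec3 → Vec3, IsTestV T ψ →
    (∫ x, ϱ0 x * dot3 (u0 x) (ψ 0 x) ∂μΩ)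
      + ∫ t in Set.Ioi (0:ℝ),
          (∫ x,
            (ϱ t x * dot3 (u t x) (dtV ψ t x)
              + mdot3 (fun i j => ϱ t x * u t x i * u t x j) (gradV (ψ t) x)
              + (1/ε^2) * press γ κ (ϱ t x) * div3 (ψ t) x
              + (1/ε^2) * ϱ t x * dot3 (grad P.G x) (ψ t x)
              - ν * mdot3 (fun i j => ϱ t x * Dsym (u t) x i j) (gradV (ψ t) x)) ∂μΩ) = 0
  energy_ineq : ∀ᵐ t ∂(volume.restrict (Set.Ioi (0:ℝ))),
    energyE γ κ ε P.b (ϱ t) (u t)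
      + ν * ∫ s in Set.Ioc (0:ℝ) t,
          (∫ x, ϱ s x * mdot3 (Dsym (u s) x) (Dsym (u s) x) ∂μΩ)
      ≤ energyE γ κ ε P.b ϱ0 u0
  bd_entropy : ∀ᵐ t ∂(volume.restrict (Set.Ioi (0:ℝ))),
    energyF ν P.b (ϱ t) (u t)
      + (ν/ε^2) * ∫ s in Set.Ioc (0:ℝ) t,
          (∫ x, (P.b x)^2 * (deriv (press γ κ) (ϱ s x) / ϱ s x)
              * sq3 (grad (fun y => ϱ s y / P.b y) x) ∂μΩ)
      + ν * ∫ s in Set.Ioc (0:ℝ) t,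
          (∫ x, ϱ s x * mdot3 (Askew (u s) x) (Askew (u s) x) ∂μΩ)
      ≤ C0 * Real.exp (C0 * (1 + t))

/-- A family (indexed by `ε ∈ (0,1]`) of ill-prepared initial data,
with uniformly bounded energy and BD entropy. -/
structure IllPreparedFamily (γ κ ν : ℝ) (P : StaticProfile γ κ)
    (ϱ0 : ℝ → Vec3 → ℝ) (u0 : ℝ → Vec3 → Vec3) (φ0 : ℝ → Vec3 → ℝ) : Prop where
  decomp : ∀ ε ∈ Set.Ioc (0:ℝ) 1, ∀ x, ϱ0 ε x = P.b x + ε * φ0 ε x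
  bd_φ0 : ∃ C, ∀ ε ∈ Set.Ioc (0:ℝ) 1, ∀ x, |φ0 ε x| ≤ C
  bd_gradlog : ∃ C, ∀ ε ∈ Set.Ioc (0:ℝ) 1, ∀ x,
    Real.sqrt (sq3 (grad (fun y => Real.log (ϱ0 ε y / P.b y)) x)) ≤ C
  bd_u0 : ∃ C, ∀ ε ∈ Set.Ioc (0:ℝ) 1, ∀ x i, |u0 ε x i| ≤ C
  bd_energy : ∃ C, ∀ ε ∈ Set.Ioc (0:ℝ) 1,
    energyE γ κ ε P.b (ϱ0 ε) (u0 ε) + energyF ν P.b (ϱ0 ε) (u0 ε) ≤ C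

/-- The essential set `{ b_*/2 ≤ ϱ ≤ 2 b^* }`. -/
def essSet (bLow bHigh : ℝ) (ρ : Vec3 → ℝ) : Set Vec3 :=
  {x | bLow / 2 ≤ ρ x ∧ ρ x ≤ 2 * bHigh}

/-- `k`-th Fourier coefficient of a (periodic) function on the torus. -/
def fourierCoef (f : Vec3 → ℝ) (k : Fin 3 → ℤ) : ℂ :=
  ∫ y in cube, (f y : ℂ)
      * Complex.exp (-(2 * (Real.pi : ℂ) * Complex.I) * (∑ i, (k i : ℂ) * (y i : ℂ)))

/-- Symbol of the low-frequency cut-off `S_M = Id on k = 0 plus Σ_{j ≤ M-1} φ(2^{-j}|k|)`. -/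
def smSymbol (φLP : ℝ → ℝ) (M : ℕ) (k : Fin 3 → ℤ) : ℝ :=
  if k = 0 then 1
  else ∑' j : ℤ, if j ≤ (M : ℤ) - 1
    then φLP ((2:ℝ) ^ (-j) * Real.sqrt (∑ i, ((k i : ℝ))^2)) else 0

/-- The low-frequency Littlewood–Paley cut-off operator `S_M` on the torus. -/
def SM (φLP : ℝ → ℝ) (M : ℕ) (f : Vec3 → ℝ) (x : Vec3) : ℝ :=
  (∑' k : Fin 3 → ℤ, ((smSymbol φLP M k : ℝ) : ℂ) * fourierCoef f k
      * Complex.exp ((2 * (Real.pi : ℂ) * Complex.I) * (∑ i, (k i : ℂ) * (x i : ℂ)))).re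

/-- `S_M` applied componentwise to a vector field. -/
def SMV (φLP : ℝ → ℝ) (M : ℕ) (f : Vec3 → Vec3) (x : Vec3) : Vec3 :=
  fun i => SM φLP M (fun y => f y i) x

/-- A Littlewood–Paley partition-of-unity generating function. -/
structure IsLPFunction (φLP : ℝ → ℝ) : Prop where
  smooth : ContDiff ℝ (⊤ : ℕ∞) φLP
  even : ∀ r, φLP (-r) = φLP r
  range : ∀ r, 0 ≤ φLP r ∧ φLP r ≤ 1
  support : ∀ r, φLP r ≠ 0 → 5/6 ≤ |r| ∧ |r| ≤ 12/5
  partition : ∀ r : ℝ, r ≠ 0 → ∑' j : ℤ, φLP ((2:ℝ) ^ (-j) * r) = 1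

end

section AuxSqrtRate

lemma Hpot_closed {γ κ : ℝ} (hγ : 1 < γ) (hκ : 0 < κ) {x : ℝ} (hx : 0 < x) :
    Hpot γ κ x = x ^ γ / (γ * (γ - 1)) + x ^ (-κ) / (κ * (κ + 1))
      - (1 / (γ * (γ - 1)) + 1 / (κ * (κ + 1))) * x := by
  have hγ0 : γ ≠ 0 := by linarith
  have hγ1 : γ - 1 ≠ 0 := sub_ne_zero.mpr hγ.ne'
  have hκ0 : κ ≠ 0 := hκ.ne'
  have hκ1 : κ + 1 ≠ 0 := by positivity
  have hx0 : x ≠ 0 := hx.ne'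
  have hpos : ∀ z ∈ Set.uIcc (1:ℝ) x, 0 < z := by
    intro z hz
    rcases Set.mem_uIcc.mp hz with ⟨h, _⟩ | ⟨h, _⟩ <;> linarith
  have h0 : (0:ℝ) ∉ Set.uIcc 1 x := fun h => absurd (hpos 0 h) (lt_irrefl 0)
  have hcong : Set.EqOn (fun z => press γ κ z / z ^ 2)
      (fun z => z ^ (γ - 2) / γ - z ^ (-κ - 2) / κ) (Set.uIcc 1 x) := by
    intro z hz
    have hz0 : 0 < z := hpos z hz
    have h2 : (z:ℝ) ^ (2:ℕ) = z ^ (2:ℝ) := by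
      rw [← Real.rpow_natCast z 2]; norm_num
    have e1 : z ^ (γ - 2) = z ^ γ / z ^ (2:ℕ) := by rw [h2, ← Real.rpow_sub hz0]
    have e2 : z ^ (-κ - 2) = z ^ (-κ) / z ^ (2:ℕ) := by rw [h2, ← Real.rpow_sub hz0]
    simp only [press, e1, e2]
    ring
  have I1 : IntervalIntegrable (fun z:ℝ => z ^ (γ-2)) MeasureTheory.volume 1 x :=
    intervalIntegral.intervalIntegrable_rpow' (by linarith)
  have I2 : IntervalIntegrable (fun z:ℝ => z ^ (-κ-2)) MeasureTheory.volume 1 x :=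
    intervalIntegral.intervalIntegrable_rpow (Or.inr h0)
  rw [Hpot, intervalIntegral.integral_congr hcong,
    intervalIntegral.integral_sub (I1.div_const γ) (I2.div_const κ),
    intervalIntegral.integral_div, intervalIntegral.integral_div,
    integral_rpow (Or.inl (by linarith)),
    integral_rpow (Or.inr ⟨by norm_num; linarith, h0⟩)]
  rw [show γ - 2 + 1 = γ - 1 by ring, show -κ - 2 + 1 = -κ - 1 by ring, Real.one_rpow]
  have f1 : x * x ^ (γ - 1) = x ^ γ := by
    rw [Real.rpow_sub_one hx0]; field_simp
  have f2 : x * x ^ (-κ - 1) = x ^ (-κ) := by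
    rw [Real.rpow_sub_one hx0]; field_simp
  rw [← f1, ← f2]
  have hne : -κ - 1 ≠ 0 := by intro h; linarith
  field_simp
  simp only [Real.one_rpow]
  ring

lemma deriv_Hpot_eq {γ κ : ℝ} (hγ : 1 < γ) (hκ : 0 < κ) {b : ℝ} (hb : 0 < b) :
    deriv (Hpot γ κ) b = b ^ (γ - 1) / (γ - 1) - b ^ (-κ - 1) / (κ + 1)
      - (1 / (γ * (γ - 1)) + 1 / (κ * (κ + 1))) := by
  have hγ0 : γ ≠ 0 := by linarith
  have hγ1 : γ - 1 ≠ 0 := sub_ne_zero.mpr hγ.ne'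
  have hκ0 : κ ≠ 0 := hκ.ne'
  have hκ1 : κ + 1 ≠ 0 := by positivity
  have hev : Hpot γ κ =ᶠ[nhds b] (fun x => x ^ γ / (γ * (γ - 1)) + x ^ (-κ) / (κ * (κ + 1))
      - (1 / (γ * (γ - 1)) + 1 / (κ * (κ + 1))) * x) := by
    filter_upwards [isOpen_Ioi.mem_nhds (show b ∈ Set.Ioi (0:ℝ) from hb)] with y hy
    exact Hpot_closed hγ hκ hy
  rw [hev.deriv_eq]
  have h1 : HasDerivAt (fun x : ℝ => x ^ γ) (γ * b ^ (γ - 1)) b :=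
    Real.hasDerivAt_rpow_const (Or.inl hb.ne')
  have h2 : HasDerivAt (fun x : ℝ => x ^ (-κ)) (-κ * b ^ (-κ - 1)) b :=
    Real.hasDerivAt_rpow_const (Or.inl hb.ne')
  have h3 : HasDerivAt (fun x : ℝ => (1 / (γ * (γ - 1)) + 1 / (κ * (κ + 1))) * x)
      (1 / (γ * (γ - 1)) + 1 / (κ * (κ + 1))) b := by
    simpa using (hasDerivAt_id b).const_mul (1 / (γ * (γ - 1)) + 1 / (κ * (κ + 1)))
  have H := ((h1.div_const (γ * (γ - 1))).add (h2.div_const (κ * (κ + 1)))).sub h3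
  erw [H.deriv]
  field_simp
  ring

lemma Hrel_closed {γ κ : ℝ} (hγ : 1 < γ) (hκ : 0 < κ) {x b : ℝ} (hx : 0 < x) (hb : 0 < b) :
    Hrel γ κ x b = (x ^ γ - b ^ γ - γ * b ^ (γ - 1) * (x - b)) / (γ * (γ - 1))
      + (x ^ (-κ) - b ^ (-κ) + κ * b ^ (-κ - 1) * (x - b)) / (κ * (κ + 1)) := by
  have hγ0 : γ ≠ 0 := by linarith
  have hγ1 : γ - 1 ≠ 0 := sub_ne_zero.mpr hγ.ne'
  have hκ0 : κ ≠ 0 := hκ.ne'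
  have hκ1 : κ + 1 ≠ 0 := by positivity
  rw [Hrel, Hpot_closed hγ hκ hx, Hpot_closed hγ hκ hb, deriv_Hpot_eq hγ hκ hb]
  field_simp
  ring

lemma gamma_part_nonneg {γ : ℝ} (hγ : 1 ≤ γ) {x b : ℝ} (hx : 0 < x) (hb : 0 < b) :
    0 ≤ x ^ γ - b ^ γ - γ * b ^ (γ - 1) * (x - b) := by
  have hs : (-1:ℝ) ≤ x / b - 1 := by
    have : 0 ≤ x / b := by positivity
    linarith
  have h := one_add_mul_self_le_rpow_one_add hs hγ
  rw [show (1 + (x / b - 1)) = x / b by ring] at h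
  rw [Real.div_rpow hx.le hb.le] at h
  have hbγ : 0 < b ^ γ := Real.rpow_pos_of_pos hb γ
  have h2 := mul_le_mul_of_nonneg_right h hbγ.le
  rw [div_mul_cancel₀ _ hbγ.ne'] at h2
  have key : (1 + γ * (x / b - 1)) * b ^ γ = b ^ γ + γ * (b ^ γ / b) * (x - b) := by
    field_simp
  rw [key, ← Real.rpow_sub_one hb.ne'] at h2
  linarith

lemma kappa_strong {κ : ℝ} (hκ : 0 < κ) {R x b : ℝ} (hx : 0 < x) (hxR : x ≤ R)
    (hb : 0 < b) (hbR : b < R) :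
    κ * (κ + 1) * R ^ (-κ - 2) / 2 * (x - b) ^ 2
      ≤ x ^ (-κ) - b ^ (-κ) + κ * b ^ (-κ - 1) * (x - b) := by
  have hR : 0 < R := hx.trans_le hxR
  set m : ℝ := κ * (κ + 1) * R ^ (-κ - 2) with hm
  set f : ℝ → ℝ := fun y => y ^ (-κ) - m / 2 * y ^ 2 with hf
  have hder : ∀ y : ℝ, 0 < y → HasDerivAt f (-κ * y ^ (-κ - 1) - m * y) y := by
    intro y hy
    have h1 : HasDerivAt (fun z : ℝ => z ^ (-κ)) (-κ * y ^ (-κ - 1)) y :=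
      Real.hasDerivAt_rpow_const (Or.inl hy.ne')
    have h2 : HasDerivAt (fun z : ℝ => m / 2 * z ^ 2) (m / 2 * (2 * y ^ 1)) y := by
      simpa using (hasDerivAt_pow 2 y).const_mul (m / 2)
    have := h1.sub h2
    exact this.congr_deriv (by ring)
  have hg : ∀ y : ℝ, 0 < y →
      HasDerivAt (fun z : ℝ => -κ * z ^ (-κ - 1) - m * z) (-κ * ((-κ - 1) * y ^ (-κ - 1 - 1)) - m) y := by
    intro y hy
    have h1 : HasDerivAt (fun z : ℝ => z ^ (-κ - 1)) ((-κ - 1) * y ^ (-κ - 1 - 1)) y :=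
      Real.hasDerivAt_rpow_const (Or.inl hy.ne')
    have h2 : HasDerivAt (fun z : ℝ => m * z) m y := by
      simpa using (hasDerivAt_id y).const_mul m
    exact (h1.const_mul (-κ)).sub h2
  have hderiv_eq : Set.EqOn (deriv f) (fun y => -κ * y ^ (-κ - 1) - m * y) (Set.Ioi 0) := by
    intro y hy
    exact (hder y hy).deriv
  have hconv : ConvexOn ℝ (Set.Ioc 0 R) f := by
    apply convexOn_of_deriv2_nonneg (convex_Ioc 0 R)
    · intro y hy
      exact ((hder y hy.1).differentiableAt.continuousAt).continuousWithinAt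
    · intro y hy
      rw [interior_Ioc] at hy
      exact (hder y hy.1).differentiableAt.differentiableWithinAt
    · rw [interior_Ioc]
      apply DifferentiableOn.congr (f := fun y => -κ * y ^ (-κ - 1) - m * y)
      · intro y hy
        exact (hg y hy.1).differentiableAt.differentiableWithinAt
      · intro y hy
        exact hderiv_eq hy.1
    · intro y hy
      rw [interior_Ioc] at hy
      have hy0 : (0:ℝ) < y := hy.1
      have e1 : deriv (deriv f) y = -κ * ((-κ - 1) * y ^ (-κ - 1 - 1)) - m := by
        have hev : deriv f =ᶠ[nhds y] (fun z => -κ * z ^ (-κ - 1) - m * z) := by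
          filter_upwards [isOpen_Ioi.mem_nhds (show y ∈ Set.Ioi (0:ℝ) from hy0)] with z hz
          exact hderiv_eq hz
        rw [hev.deriv_eq, (hg y hy0).deriv]
      show 0 ≤ deriv (deriv f) y
      rw [e1]
      have hy2 : R ^ (-κ - 2) ≤ y ^ (-κ - 2) :=
        Real.rpow_le_rpow_of_nonpos hy0 hy.2.le (by linarith)
      have : -κ * ((-κ - 1) * y ^ (-κ - 1 - 1)) = κ * (κ + 1) * y ^ (-κ - 2) := by
        rw [show -κ - 1 - 1 = -κ - 2 by ring]
        ring
      rw [this, hm]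
      nlinarith [mul_le_mul_of_nonneg_left hy2 (by positivity : (0:ℝ) ≤ κ * (κ + 1))]
  have hb_mem : b ∈ Set.Ioc (0:ℝ) R := ⟨hb, hbR.le⟩
  have hx_mem : x ∈ Set.Ioc (0:ℝ) R := ⟨hx, hxR⟩
  have hdb := hder b hb
  have tangent : f b + (-κ * b ^ (-κ - 1) - m * b) * (x - b) ≤ f x := by
    rcases lt_trichotomy x b with h | h | h
    · have hs := hconv.slope_le_deriv hx_mem hb_mem h hdb.differentiableAt
      rw [hdb.deriv, slope_def_field] at hs
      have hbx : 0 < b - x := by linarith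
      have := (div_le_iff₀ hbx).mp hs
      nlinarith [this]
    · subst h; simp
    · have hs := hconv.deriv_le_slope hb_mem hx_mem h hdb.differentiableAt
      rw [hdb.deriv, slope_def_field] at hs
      have hxb : 0 < x - b := by linarith
      have := (le_div_iff₀ hxb).mp hs
      nlinarith [this]
  simp only [hf] at tangent
  nlinarith [tangent]

set_option maxHeartbeats 1000000 in
lemma sqrt_sq_le_pointwise {γ κ bLow bHigh : ℝ} (hγ : 1 < γ) (hκ : 0 < κ)
    (h1 : 0 < bLow) (h2 : bLow ≤ bHigh) :
    ∃ c > 0, ∀ x b : ℝ, 0 < x → b ∈ Set.Icc bLow bHigh →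
      (Real.sqrt x - Real.sqrt b) ^ 2 ≤ c * Hrel γ κ x b := by
  have hbH0 : 0 < bHigh := lt_of_lt_of_le h1 h2
  set R : ℝ := 2 * (κ + 1) / κ * bHigh with hR
  have hRpos : 0 < R := by positivity
  have hRb : bHigh < R := by
    rw [hR]
    have h3 : 1 < 2 * (κ + 1) / κ := by
      rw [lt_div_iff₀ hκ]; linarith
    nlinarith
  set m : ℝ := κ * (κ + 1) * R ^ (-κ - 2) / 2 with hm
  have hmpos : 0 < m := by
    have := Real.rpow_pos_of_pos hRpos (-κ - 2)
    positivity
  set c₁ : ℝ := κ * (κ + 1) / (m * bLow) with hc₁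
  set c₂ : ℝ := κ * (κ + 1) * (2 / κ) * bHigh ^ (κ + 1) with hc₂
  have hbb : 0 < bHigh ^ (κ + 1) := Real.rpow_pos_of_pos hbH0 (κ + 1)
  have hc₁pos : 0 < c₁ := by positivity
  have hc₂pos : 0 < c₂ := by positivity
  refine ⟨max c₁ c₂, lt_max_iff.mpr (Or.inl hc₁pos), ?_⟩
  intro x b hx hbmem
  obtain ⟨hbL, hbHi⟩ := hbmem
  have hb : 0 < b := lt_of_lt_of_le h1 hbL
  have hγγ : 0 < γ * (γ - 1) := by nlinarith
  have hκκ : 0 < κ * (κ + 1) := by nlinarith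
  set G : ℝ := x ^ γ - b ^ γ - γ * b ^ (γ - 1) * (x - b) with hGdef
  set K : ℝ := x ^ (-κ) - b ^ (-κ) + κ * b ^ (-κ - 1) * (x - b) with hKdef
  have hHrel : Hrel γ κ x b = G / (γ * (γ - 1)) + K / (κ * (κ + 1)) :=
    Hrel_closed hγ hκ hx hb
  have hG : 0 ≤ G := gamma_part_nonneg hγ.le hx hb
  have hKrel : K ≤ κ * (κ + 1) * Hrel γ κ x b := by
    have e : κ * (κ + 1) * (G / (γ * (γ - 1)) + K / (κ * (κ + 1)))
        = κ * (κ + 1) * G / (γ * (γ - 1)) + K := by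
      field_simp
    rw [hHrel, e]
    have : 0 ≤ κ * (κ + 1) * G / (γ * (γ - 1)) :=
      div_nonneg (mul_nonneg hκκ.le hG) hγγ.le
    linarith
  -- sqrt facts
  have hsx : Real.sqrt x ^ 2 = x := Real.sq_sqrt hx.le
  have hsb : Real.sqrt b ^ 2 = b := Real.sq_sqrt hb.le
  have hsxn : 0 ≤ Real.sqrt x := Real.sqrt_nonneg x
  have hsbn : 0 ≤ Real.sqrt b := Real.sqrt_nonneg b
  rcases le_or_gt x R with hxR | hxR
  · -- small densities: strong convexity
    have hks' := kappa_strong hκ hx hxR hb (lt_of_le_of_lt hbHi hRb)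
    have hks : m * (x - b) ^ 2 ≤ K := by rw [hm, hKdef]; exact hks'
    have hK0 : 0 ≤ K := le_trans (by positivity) hks
    have hHnn : 0 ≤ Hrel γ κ x b := by
      rw [hHrel]
      exact add_nonneg (div_nonneg hG hγγ.le) (div_nonneg hK0 hκκ.le)
    have hprod : (Real.sqrt x - Real.sqrt b) * (Real.sqrt x + Real.sqrt b) = x - b := by
      have : (Real.sqrt x - Real.sqrt b) * (Real.sqrt x + Real.sqrt b)
          = Real.sqrt x ^ 2 - Real.sqrt b ^ 2 := by ring
      rw [this, hsx, hsb]
    have hsum : bLow ≤ (Real.sqrt x + Real.sqrt b) ^ 2 := by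
      nlinarith [mul_nonneg hsxn hsbn]
    have hsq : (Real.sqrt x - Real.sqrt b) ^ 2 * bLow ≤ (x - b) ^ 2 := by
      have h4 : (x - b) ^ 2 = (Real.sqrt x - Real.sqrt b) ^ 2 * (Real.sqrt x + Real.sqrt b) ^ 2 := by
        rw [← hprod]; ring
      rw [h4]
      exact mul_le_mul_of_nonneg_left hsum (sq_nonneg _)
    have step : (Real.sqrt x - Real.sqrt b) ^ 2 ≤ c₁ * Hrel γ κ x b := by
      rw [hc₁, div_mul_eq_mul_div, le_div_iff₀ (by positivity)]
      calc (Real.sqrt x - Real.sqrt b) ^ 2 * (m * bLow)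
          = m * ((Real.sqrt x - Real.sqrt b) ^ 2 * bLow) := by ring
        _ ≤ m * (x - b) ^ 2 := mul_le_mul_of_nonneg_left hsq hmpos.le
        _ ≤ K := hks
        _ ≤ κ * (κ + 1) * Hrel γ κ x b := hKrel
    calc (Real.sqrt x - Real.sqrt b) ^ 2 ≤ c₁ * Hrel γ κ x b := step
      _ ≤ max c₁ c₂ * Hrel γ κ x b :=
        mul_le_mul_of_nonneg_right (le_max_left _ _) hHnn
  · -- large densities
    have hbx : b < x := lt_of_le_of_lt (le_trans hbHi hRb.le) hxR
    have hxpow : 0 ≤ x ^ (-κ) := (Real.rpow_pos_of_pos hx _).le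
    have hbb1 : b ^ (-κ - 1) * b = b ^ (-κ) := by
      rw [Real.rpow_sub_one hb.ne']
      field_simp
    have hbp : 0 < b ^ (-κ - 1) := Real.rpow_pos_of_pos hb _
    have hRx : 2 * (κ + 1) * b ≤ κ * x := by
      have h6 := mul_le_mul_of_nonneg_left hxR.le hκ.le
      have h7 : κ * (2 * (κ + 1) / κ * bHigh) = 2 * (κ + 1) * bHigh := by
        field_simp
      rw [hR, h7] at h6
      nlinarith [mul_le_mul_of_nonneg_left hbHi (by positivity : (0:ℝ) ≤ 2 * (κ + 1))]
    have hK2 : κ / 2 * b ^ (-κ - 1) * x ≤ K := by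
      rw [hKdef]
      have h5 := mul_le_mul_of_nonneg_left hRx hbp.le
      nlinarith [h5, hxpow, hbb1]
    have hbHpow : bHigh ^ (-κ - 1) ≤ b ^ (-κ - 1) :=
      Real.rpow_le_rpow_of_nonpos hb hbHi (by linarith)
    have hK3 : κ / 2 * bHigh ^ (-κ - 1) * x ≤ K := by
      have h8 := mul_le_mul_of_nonneg_right hbHpow (by positivity : (0:ℝ) ≤ κ / 2 * x)
      calc κ / 2 * bHigh ^ (-κ - 1) * x ≤ κ / 2 * b ^ (-κ - 1) * x := by linarith
        _ ≤ K := hK2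
    have hK0 : 0 ≤ K := by
      have h9 : 0 < κ / 2 * bHigh ^ (-κ - 1) * x := by
        have := Real.rpow_pos_of_pos hbH0 (-κ - 1); positivity
      linarith
    have hHnn : 0 ≤ Hrel γ κ x b := by
      rw [hHrel]
      exact add_nonneg (div_nonneg hG hγγ.le) (div_nonneg hK0 hκκ.le)
    have hsqx : (Real.sqrt x - Real.sqrt b) ^ 2 ≤ x := by
      have hmono : Real.sqrt b ≤ Real.sqrt x := Real.sqrt_le_sqrt hbx.le
      have h10 : 0 ≤ Real.sqrt b * (2 * Real.sqrt x - Real.sqrt b) :=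
        mul_nonneg hsbn (by linarith)
      nlinarith [h10]
    have hinv : bHigh ^ (-κ - 1) = (bHigh ^ (κ + 1))⁻¹ := by
      rw [show -κ - 1 = -(κ + 1) by ring, Real.rpow_neg hbH0.le]
    have hxK : x ≤ 2 / κ * bHigh ^ (κ + 1) * K := by
      have h11 := mul_le_mul_of_nonneg_left hK3
        (by positivity : (0:ℝ) ≤ 2 / κ * bHigh ^ (κ + 1))
      have h12 : 2 / κ * bHigh ^ (κ + 1) * (κ / 2 * bHigh ^ (-κ - 1) * x) = x := by
        rw [hinv]; field_simp
      linarith [h11, h12.ge, h12.le]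
    have step : (Real.sqrt x - Real.sqrt b) ^ 2 ≤ c₂ * Hrel γ κ x b := by
      calc (Real.sqrt x - Real.sqrt b) ^ 2 ≤ x := hsqx
        _ ≤ 2 / κ * bHigh ^ (κ + 1) * K := hxK
        _ ≤ 2 / κ * bHigh ^ (κ + 1) * (κ * (κ + 1) * Hrel γ κ x b) :=
            mul_le_mul_of_nonneg_left hKrel (by positivity)
        _ = c₂ * Hrel γ κ x b := by rw [hc₂]; ring
    calc (Real.sqrt x - Real.sqrt b) ^ 2 ≤ c₂ * Hrel γ κ x b := step
      _ ≤ max c₁ c₂ * Hrel γ κ x b :=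
        mul_le_mul_of_nonneg_right (le_max_right _ _) hHnn

end AuxSqrtRate

/-- The square roots of the densities converge at rate ε in L². -/
theorem sqrt_density_rate (γ κ bLow bHigh C : ℝ)
    (hγ : 1 < γ) (hκ : 0 < κ) (h1 : 0 < bLow) (h2 : bLow ≤ bHigh) (hC : 0 < C) :
    ∃ C' > 0, ∀ ε ∈ Set.Ioc (0:ℝ) 1, ∀ ϱ b : Vec3 → ℝ,
      Measurable ϱ → Measurable b →
      (∀ x, 0 < ϱ x) → (∀ x, b x ∈ Set.Icc bLow bHigh) →
      (∫⁻ x, ENNReal.ofReal (Hrel γ κ (ϱ x) (b x)) ∂μΩ ≤ ENNReal.ofReal (C * ε ^ 2)) →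
      ∫⁻ x, ENNReal.ofReal ((Real.sqrt (ϱ x) - Real.sqrt (b x)) ^ 2) ∂μΩ
        ≤ ENNReal.ofReal (C' * ε ^ 2) := by
  obtain ⟨c, hc, hpt⟩ := sqrt_sq_le_pointwise hγ hκ h1 h2
  refine ⟨c * C, by positivity, ?_⟩
  intro ε hε ϱ b _ _ hϱ hbmem hint
  calc ∫⁻ x, ENNReal.ofReal ((Real.sqrt (ϱ x) - Real.sqrt (b x)) ^ 2) ∂μΩ
      ≤ ∫⁻ x, ENNReal.ofReal (c * Hrel γ κ (ϱ x) (b x)) ∂μΩ := by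
        apply MeasureTheory.lintegral_mono
        intro x
        exact ENNReal.ofReal_le_ofReal (hpt _ _ (hϱ x) (hbmem x))
    _ = ∫⁻ x, ENNReal.ofReal c * ENNReal.ofReal (Hrel γ κ (ϱ x) (b x)) ∂μΩ := by
        simp_rw [ENNReal.ofReal_mul hc.le]
    _ = ENNReal.ofReal c * ∫⁻ x, ENNReal.ofReal (Hrel γ κ (ϱ x) (b x)) ∂μΩ :=
        MeasureTheory.lintegral_const_mul' _ _ ENNReal.ofReal_ne_top
    _ ≤ ENNReal.ofReal c * ENNReal.ofReal (C * ε ^ 2) := mul_le_mul_right hint _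
    _ = ENNReal.ofReal (c * C * ε ^ 2) := by
        rw [← ENNReal.ofReal_mul hc.le, mul_assoc]
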